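/- arXiv:1110.5959 — 4 statements merged into one kernel-verified Lean document; each statement's English description precedes it below -/
import Mathlib

section
/- Let p be a prime with p ≡ 1 (mod 8), and let x, y, D be integers with p not dividing D such that x² − D·y² = p. If α is an integer with α² ≡ D (mod p), then either x + α·y ≡ 0 (mod p) or α·(x + α·y) is a quadratic residue modulo p. -/
/-!
Since `x² − α²y² ≡ x² − Dy² = p ≡ 0`, the prime `p` divides `x − αy` whenever it does not divide
`x + αy`, and then `α(x + αy) ≡ 2α²y (mod p)`. As `(2/p) = 1`, it remains to see `(y/p) = 1`.
Now `p = x² − Dy²` is a square modulo `y`, so for every odd divisor `m` of `y` reciprocity gives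
`(m/p) = (p/m) = 1`; the sign and the powers of `2` in `y` contribute `(−1/p) = (2/p) = 1`.
-/

open ZMod NumberTheorySymbols

theorem ZMod.χ₈_nat_eq_one_of_mod_eight {p : ℕ} (hp : p % 8 = 1) : χ₈ p = 1 := by
  rw [χ₈_nat_eq_if_mod_eight]
  simp [hp, show p % 2 = 1 by omega]

namespace jacobiSym

variable {p : ℕ}

theorem natCast_eq_one_of_odd_of_dvd_sq_sub (hp : p % 4 = 1) {x : ℤ} {m : ℕ} (hm : Odd m)
    (hx : IsCoprime x m) (hdvd : (m : ℤ) ∣ x ^ 2 - p) : J(m | p) = 1 := by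
  rw [quadratic_reciprocity_one_mod_four' hm hp,
    mod_left' (Int.modEq_iff_dvd.mpr hdvd)]
  exact sq_one' (Int.isCoprime_iff_gcd_eq_one.mp hx)

theorem natCast_eq_one_of_dvd_sq_sub (hp : p % 8 = 1) {x : ℤ} {n : ℕ} (hn : n ≠ 0)
    (hx : IsCoprime x n) (hdvd : (n : ℤ) ∣ x ^ 2 - p) : J(n | p) = 1 := by
  obtain ⟨k, m, hm, rfl⟩ := Nat.exists_eq_two_pow_mul_odd hn
  push_cast at hx hdvd ⊢
  rw [mul_left, pow_left, at_two (Nat.odd_iff.mpr (by omega)), χ₈_nat_eq_one_of_mod_eight hp,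
    one_pow, one_mul]
  exact natCast_eq_one_of_odd_of_dvd_sq_sub (by omega) hm hx.of_mul_right_right
    (dvd_trans (Dvd.intro_left _ rfl) hdvd)

theorem eq_one_of_dvd_sq_sub (hp : p % 8 = 1) {x n : ℤ} (hn : n ≠ 0)
    (hx : IsCoprime x n) (hdvd : n ∣ x ^ 2 - p) : J(n | p) = 1 := by
  have hnat : J(n.natAbs | p) = 1 := natCast_eq_one_of_dvd_sq_sub hp (Int.natAbs_ne_zero.mpr hn)
    (by rw [Int.isCoprime_iff_nat_coprime] at hx ⊢; rwa [Int.natAbs_natCast])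
    (Int.natAbs_dvd.mpr hdvd)
  rcases Int.natAbs_eq n with h | h <;> rw [h]
  · exact hnat
  · rw [jacobiSym.neg _ (Nat.odd_iff.mpr (by omega)), χ₄_nat_one_mod_four (by omega), hnat,
      one_mul]

end jacobiSym

section NormForm

variable {R : Type*} [CommRing R] {p x y D α : R}

theorem dvd_sub_of_sq_sub_mul_sq_eq (hp : Prime p) (hxy : x ^ 2 - D * y ^ 2 = p)
    (hα : p ∣ α ^ 2 - D) (h : ¬ p ∣ x + α * y) : p ∣ x - α * y := by
  refine (hp.dvd_mul.mp ?_).resolve_right h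
  rw [show (x - α * y) * (x + α * y) = p - (α ^ 2 - D) * y ^ 2 by rw [← hxy]; ring]
  exact dvd_sub dvd_rfl (dvd_mul_of_dvd_left hα _)

theorem isCoprime_of_sq_sub_mul_sq_eq (hxy : x ^ 2 - D * y ^ 2 = p) (hp : IsCoprime p y) :
    IsCoprime x y := by
  rw [← hxy, show x ^ 2 - D * y ^ 2 = x ^ 2 + y * (-D * y) by ring] at hp
  exact (IsCoprime.pow_left_iff two_pos).mp hp.of_add_mul_left_left

end NormForm

/-- Lemma (Soroosh): for a prime `p ≡ 1 (mod 8)` and integers `x, y, D` with `p ∤ D` and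
`x² − D·y² = p`, and `α` with `α² ≡ D (mod p)`, either `x + α·y ≡ 0 (mod p)` or
`α·(x + α·y)` is a quadratic residue mod `p`. -/
theorem stmt0 (p : ℕ) [Fact p.Prime] (hp8 : p % 8 = 1)
    (x y D α : ℤ) (hD : ¬ (p : ℤ) ∣ D)
    (hxy : x ^ 2 - D * y ^ 2 = (p : ℤ))
    (hα : (p : ℤ) ∣ (α ^ 2 - D)) :
    (p : ℤ) ∣ (x + α * y) ∨ legendreSym p (α * (x + α * y)) = 1 := by
  by_cases h : (p : ℤ) ∣ x + α * y
  · exact Or.inl h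
  right
  have hp : Prime (p : ℤ) := Nat.prime_iff_prime_int.mp Fact.out
  have hsub : (p : ℤ) ∣ x - α * y := dvd_sub_of_sq_sub_mul_sq_eq hp hxy hα h
  have hy : ¬ (p : ℤ) ∣ y := fun hy ↦ h <| by
    rw [show x + α * y = x - α * y + 2 * α * y by ring]
    exact dvd_add hsub (dvd_mul_of_dvd_right hy _)
  have hα0 : ¬ (p : ℤ) ∣ α := fun hα0 ↦ hD <| by
    rw [show D = α * α - (α ^ 2 - D) by ring]
    exact dvd_sub (dvd_mul_of_dvd_right hα0 _) hα
  have hcong : α * (x + α * y) ≡ 2 * α ^ 2 * y [ZMOD p] := by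
    refine (Int.modEq_iff_dvd.mpr ?_).symm
    rw [show α * (x + α * y) - 2 * α ^ 2 * y = α * (x - α * y) by ring]
    exact dvd_mul_of_dvd_right hsub _
  have hy_residue : legendreSym p y = 1 := by
    rw [jacobiSym.legendreSym.to_jacobiSym]
    exact jacobiSym.eq_one_of_dvd_sq_sub hp8 (by rintro rfl; simp at hy)
      (isCoprime_of_sq_sub_mul_sq_eq hxy (hp.coprime_iff_not_dvd.mpr hy))
      ⟨D * y, by rw [← hxy]; ring⟩
  rw [legendreSym.mod, hcong, ← legendreSym.mod, legendreSym.mul, legendreSym.mul,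
    legendreSym.at_two (by omega), χ₈_nat_eq_one_of_mod_eight hp8,
    legendreSym.sq_one' p (by rwa [Ne, ZMod.intCast_zmod_eq_zero_iff_dvd]), hy_residue, mul_one,
    mul_one]
end

section
/- Let p be a prime with p ≡ 1 (mod 8), and let x, y be integers with x² − 2y² = p. Then y is a quadratic residue modulo p. -/
/-!
Write `|y| = 2ᵏ m` with `m` odd. Since `p ≡ 1 (mod 8)`, both `-1` and `2` are squares mod `p`,
so `(y/p) = (m/p)`, and reciprocity for the Jacobi symbol gives `(m/p) = (p/m)`. Modulo `m` we
have `p ≡ x²`, and `x` is prime to `m` because `gcd(x, y)² ∣ p`; hence `(p/m) = 1`.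
-/

lemma Int.gcd_eq_one_of_sq_sub_mul_sq_eq_prime {p : ℕ} (hp : p.Prime) {d x y m : ℤ}
    (h : x ^ 2 - d * y ^ 2 = p) (hm : m ∣ y) : Int.gcd x m = 1 := by
  set g := Int.gcd x m
  have hgx : (g : ℤ) ∣ x := Int.gcd_dvd_left x m
  have hgy : (g : ℤ) ∣ y := (Int.gcd_dvd_right x m).trans hm
  have hgp : g * g ∣ p := by
    rw [← Int.natCast_dvd_natCast, ← h]
    push_cast
    exact dvd_sub (by rw [sq]; exact mul_dvd_mul hgx hgx)
      (Dvd.dvd.mul_left (by rw [sq]; exact mul_dvd_mul hgy hgy) d)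
  exact Nat.isUnit_iff.mp (hp.prime.irreducible.squarefree g hgp)

lemma jacobiSym_natCast_eq_one_of_sq_sub_mul_sq {n m : ℕ} (hn : n % 4 = 1) (hm : Odd m)
    {d x y : ℤ} (h : x ^ 2 - d * y ^ 2 = n) (hmy : (m : ℤ) ∣ y) (hx : Int.gcd x m = 1) :
    jacobiSym m n = 1 := by
  have hnx : (n : ℤ) ≡ x ^ 2 [ZMOD m] := by
    obtain ⟨c, rfl⟩ := hmy
    exact Int.modEq_iff_dvd.mpr ⟨d * c ^ 2 * m, by linear_combination h⟩
  rw [← jacobiSym.quadratic_reciprocity_one_mod_four hn hm, jacobiSym.mod_left' hnx,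
    jacobiSym.sq_one' hx]

lemma exists_odd_dvd_jacobiSym_eq_of_mod_eight_eq_one {n : ℕ} (hn : n % 8 = 1) {y : ℤ}
    (hy : y ≠ 0) : ∃ m : ℕ, Odd m ∧ (m : ℤ) ∣ y ∧ jacobiSym y n = jacobiSym m n := by
  have hn2 : Odd n := Nat.odd_iff.mpr (by omega)
  obtain ⟨k, m, hm, hym⟩ := Nat.exists_eq_two_pow_mul_odd (Int.natAbs_ne_zero.mpr hy)
  have hJ2 : jacobiSym 2 n = 1 := by
    rw [jacobiSym.at_two hn2, ZMod.χ₈_nat_eq_if_mod_eight]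
    simp [hn, Nat.odd_iff.mp hn2]
  have hJneg : jacobiSym (-1) n = 1 := by
    rw [jacobiSym.at_neg_one hn2, ZMod.χ₄_nat_one_mod_four (by omega)]
  have hJabs : jacobiSym y.natAbs n = jacobiSym m n := by
    rw [hym]
    push_cast
    rw [jacobiSym.mul_left, jacobiSym.pow_left, hJ2, one_pow, one_mul]
  refine ⟨m, hm, Int.dvd_natAbs.mp ⟨2 ^ k, by rw [hym]; push_cast; ring⟩, ?_⟩
  rcases Int.natAbs_eq y with hy | hy <;> rw [hy]
  · exact hJabs
  · rw [neg_eq_neg_one_mul, jacobiSym.mul_left, hJneg, one_mul, hJabs]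

/-- For a prime `p ≡ 1 (mod 8)` and integers `x, y` with `x² − 2y² = p`,
`y` is a quadratic residue modulo `p`. -/
theorem stmt1 (p : ℕ) [Fact p.Prime] (hp8 : p % 8 = 1)
    (x y : ℤ) (hxy : x ^ 2 - 2 * y ^ 2 = (p : ℤ)) :
    legendreSym p y = 1 := by
  have hp : p.Prime := Fact.out
  have hy : y ≠ 0 := by
    rintro rfl
    have hx := Int.gcd_eq_one_of_sq_sub_mul_sq_eq_prime hp hxy (dvd_refl 0)
    rw [Int.gcd_zero_right] at hx
    have hx2 : x ^ 2 = 1 := by rw [← Int.natAbs_sq, hx]; norm_num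
    have := hp.one_lt
    omega
  obtain ⟨m, hm, hmy, hJ⟩ := exists_odd_dvd_jacobiSym_eq_of_mod_eight_eq_one hp8 hy
  rw [jacobiSym.legendreSym.to_jacobiSym, hJ]
  exact jacobiSym_natCast_eq_one_of_sq_sub_mul_sq (by omega) hm hxy hmy
    (Int.gcd_eq_one_of_sq_sub_mul_sq_eq_prime hp hxy hmy)
end

section
/- Let p ≡ 1 (mod 8) be a prime. Then the equation x² + p·y² = 2·z² has a solution in rational numbers with (x,y,z) ≠ (0,0,0). -/
/-!
Since `p ≡ 1 (mod 8)`, `2 ≡ a² (mod p)` for some `a`. Thue's lemma gives `x ≡ a y (mod p)` with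
`(x, y) ≠ 0` and `|x|, |y| < √p`, so `p ∣ x² - 2y²` and `-2p < x² - 2y² < p`. As `√2` is
irrational, `x² - 2y² ≠ 0`, hence `x² + p = 2y²` and `(x, 1, y)` is a solution.
-/

instance Zsqrtd.nonsquare_two : Zsqrtd.Nonsquare 2 :=
  ⟨fun n h => by
    have hn : n ≤ 1 := by nlinarith
    interval_cases n <;> omega⟩

theorem Int.eq_zero_of_sq_eq_two_mul_sq {x y : ℤ} (h : x ^ 2 = 2 * y ^ 2) : x = 0 ∧ y = 0 :=
  Zsqrtd.divides_sq_eq_zero_z (d := 2) (by push_cast; linear_combination h)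

/-- Thue's lemma, by pigeonhole on `u - a v` for `0 ≤ u, v ≤ √n`. -/
theorem ZMod.exists_abs_le_sqrt_intCast_eq_mul (n : ℕ) [NeZero n] (a : ZMod n) :
    ∃ x y : ℤ, (x, y) ≠ 0 ∧ |x| ≤ n.sqrt ∧ |y| ≤ n.sqrt ∧ (x : ZMod n) = a * y := by
  let f : Fin (n.sqrt + 1) × Fin (n.sqrt + 1) → ZMod n := fun uv => uv.1 - a * uv.2
  have hcard : Fintype.card (ZMod n) < Fintype.card (Fin (n.sqrt + 1) × Fin (n.sqrt + 1)) := by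
    simpa [ZMod.card, sq] using n.lt_succ_sqrt'
  obtain ⟨⟨u, v⟩, ⟨u', v'⟩, hne, heq⟩ := Fintype.exists_ne_map_eq_of_card_lt f hcard
  refine ⟨(u : ℤ) - u', (v : ℤ) - v', ?_, ?_, ?_, ?_⟩
  · intro h
    simp only [Prod.mk_eq_zero, sub_eq_zero, Nat.cast_inj] at h
    exact hne (Prod.ext (Fin.ext h.1) (Fin.ext h.2))
  · have := u.isLt; have := u'.isLt
    rw [abs_le]; constructor <;> omega
  · have := v.isLt; have := v'.isLt
    rw [abs_le]; constructor <;> omega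
  · push_cast
    simp only [f] at heq
    linear_combination heq

theorem exists_sq_sub_two_mul_sq_eq_neg_of_isSquare_two {n : ℕ} (hn : ¬IsSquare n)
    (h2 : IsSquare (2 : ZMod n)) :
    ∃ x y : ℤ, x ^ 2 - 2 * y ^ 2 = -n := by
  have : NeZero n := ⟨by rintro rfl; exact hn ⟨0, rfl⟩⟩
  obtain ⟨a, ha⟩ := h2
  obtain ⟨x, y, hxy, hx, hy, hxa⟩ := ZMod.exists_abs_le_sqrt_intCast_eq_mul n a
  have hsqrt : n.sqrt ^ 2 < n :=
    lt_of_le_of_ne n.sqrt_le' fun h => hn ⟨n.sqrt, by rw [← sq, h]⟩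
  have hsqrt' : ((n.sqrt : ℕ) : ℤ) ^ 2 < n := by exact_mod_cast hsqrt
  have hx2 : x ^ 2 < n := by nlinarith [sq_abs x, abs_nonneg x]
  have hy2 : y ^ 2 < n := by nlinarith [sq_abs y, abs_nonneg y]
  obtain ⟨k, hk⟩ : (n : ℤ) ∣ x ^ 2 - 2 * y ^ 2 := by
    rw [← ZMod.intCast_zmod_eq_zero_iff_dvd]
    push_cast
    rw [hxa, mul_pow, sq a, ← ha]
    ring
  have hk0 : k ≠ 0 := by
    rintro rfl
    obtain ⟨rfl, rfl⟩ := Int.eq_zero_of_sq_eq_two_mul_sq (x := x) (y := y) (by linarith)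
    exact hxy rfl
  have hk1 : k = -1 := by
    have : -2 < k ∧ k < 1 := by
      constructor <;> by_contra! <;> nlinarith [sq_nonneg x, sq_nonneg y]
    omega
  exact ⟨x, y, by rw [hk, hk1]; ring⟩

/-- For a prime `p ≡ 1 (mod 8)`, the equation `x² + p·y² = 2·z²` has a nonzero
rational solution. -/
theorem stmt4 (p : ℕ) (hp : p.Prime) (hp8 : p % 8 = 1) :
    ∃ x y z : ℚ, ¬ (x = 0 ∧ y = 0 ∧ z = 0) ∧
      x ^ 2 + (p : ℚ) * y ^ 2 = 2 * z ^ 2 := by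
  have : Fact p.Prime := ⟨hp⟩
  have h2 : IsSquare (2 : ZMod p) := (ZMod.exists_sq_eq_two_iff (by omega)).mpr (Or.inl hp8)
  obtain ⟨x, z, hxz⟩ := exists_sq_sub_two_mul_sq_eq_neg_of_isSquare_two hp.prime.not_isSquare h2
  refine ⟨x, 1, z, fun h => one_ne_zero h.2.1, ?_⟩
  have : (x : ℚ) ^ 2 - 2 * z ^ 2 = -p := by exact_mod_cast hxz
  linear_combination this
end

section
/- Let p ≡ 1 (mod 8) be a prime such that 1+i is not a square modulo p. Then the curve v² = p(u⁴ − 4u³ + 24u + 20) has no Q_p-rational points. -/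
/-!
Write `f = X⁴ - 4X³ + 24X + 20`. If `i² = -1` mod `p`, then
`f = ((X - 1 - i)² - 4(1 + i)) ((X - 1 + i)² - 4(1 - i))`, so a root of `f` mod `p` would make
`1 + i` or `1 - i` a square; both are non-residues by hypothesis, `-i` being the other square
root of `-1`. A monic integer polynomial without roots mod `p` satisfies
`‖f(u)‖ = max(1, ‖u‖) ^ deg f` on `ℚ_p`, so `‖f(u)‖` is the square of a norm; then
`v² = p f(u)` would make `‖p‖ = p⁻¹` the square of a norm too.
-/

open Polynomial

theorem PadicInt.norm_aeval_coe_eq_one {p : ℕ} [Fact p.Prime] {f : ℤ[X]} {z : ℤ_[p]}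
    (hf : aeval (toZMod z) f ≠ 0) : ‖aeval (z : ℚ_[p]) f‖ = 1 := by
  rw [← algebraMap_apply, aeval_algebraMap_apply, algebraMap_apply, padic_norm_e_of_padicInt,
    ← isUnit_iff, ← not_not (a := IsUnit _), ← mem_nonunits_iff,
    ← IsLocalRing.mem_maximalIdeal, ← ker_toZMod, RingHom.mem_ker]
  rwa [← RingHom.toIntAlgHom_apply, ← aeval_algHom_apply]

theorem Padic.norm_aeval_of_monic {p : ℕ} [Fact p.Prime] {f : ℤ[X]} (hmon : f.Monic)
    (hroot : ∀ r : ZMod p, aeval r f ≠ 0) (u : ℚ_[p]) :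
    ‖aeval u f‖ = max 1 ‖u‖ ^ f.natDegree := by
  rcases le_or_gt ‖u‖ 1 with hu | hu
  · obtain ⟨z, rfl⟩ : ∃ z : ℤ_[p], (z : ℚ_[p]) = u := ⟨⟨u, hu⟩, rfl⟩
    rw [max_eq_left hu, one_pow, PadicInt.norm_aeval_coe_eq_one (hroot _)]
  · have hu0 : u ≠ 0 := norm_pos_iff.mp (one_pos.trans hu)
    let : Invertible u := invertibleOfNonzero hu0
    have ht : ‖u⁻¹‖ < 1 := by rw [norm_inv]; exact inv_lt_one_of_one_lt₀ hu
    obtain ⟨t, ht_eq⟩ : ∃ t : ℤ_[p], (t : ℚ_[p]) = u⁻¹ := ⟨⟨u⁻¹, ht.le⟩, rfl⟩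
    have ht0 : PadicInt.toZMod t = 0 := by
      rw [← RingHom.mem_ker, PadicInt.ker_toZMod, IsLocalRing.mem_maximalIdeal,
        mem_nonunits_iff, PadicInt.isUnit_iff, ← PadicInt.padic_norm_e_of_padicInt, ht_eq]
      exact ht.ne
    -- `f(u) = u ^ deg f * (reverse f)(1/u)`, and `(reverse f)(0) = 1` since `f` is monic.
    have hrev : ‖aeval (t : ℚ_[p]) f.reverse‖ = 1 := by
      refine PadicInt.norm_aeval_coe_eq_one ?_
      rw [ht0, ← coeff_zero_eq_aeval_zero', coeff_zero_reverse, hmon.leadingCoeff, map_one]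
      exact one_ne_zero
    rw [max_eq_right hu.le, aeval_def, ← eval₂_reverse_mul_pow, norm_mul, norm_pow,
      invOf_eq_inv, ← ht_eq, ← aeval_def, hrev, one_mul]

theorem Padic.norm_sq_ne_norm_p {p : ℕ} [hp : Fact p.Prime] (x : ℚ_[p]) :
    ‖x‖ ^ 2 ≠ ‖(p : ℚ_[p])‖ := by
  rcases eq_or_ne x 0 with rfl | hx
  · simpa [norm_p, eq_comm] using hp.out.ne_zero
  · rw [← norm_pow, norm_eq_zpow_neg_valuation (pow_ne_zero 2 hx), norm_p, valuation_pow,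
      ← zpow_neg_one]
    intro h
    have := zpow_right_injective₀ (Nat.cast_pos.mpr hp.out.pos)
      (Nat.one_lt_cast.mpr hp.out.one_lt).ne' h
    omega

noncomputable def quartic : ℤ[X] := X ^ 4 - 4 * X ^ 3 + 24 * X + 20

theorem quartic_monic : quartic.Monic := by
  unfold quartic; monicity!

theorem natDegree_quartic : quartic.natDegree = 4 := by
  unfold quartic; compute_degree!

theorem aeval_quartic {A : Type*} [CommRing A] (x : A) :
    aeval x quartic = x ^ 4 - 4 * x ^ 3 + 24 * x + 20 := by
  simp [quartic, map_ofNat]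

theorem quartic_eq_mul_of_sq_eq_neg_one {R : Type*} [CommRing R] {d : R} (hd : d ^ 2 = -1)
    (r : R) : r ^ 4 - 4 * r ^ 3 + 24 * r + 20 =
      ((r - 1 - d) ^ 2 - 4 * (1 + d)) * ((r - 1 + d) ^ 2 - 4 * (1 - d)) := by
  linear_combination (2 * r ^ 2 + 12 * r + 11 - d ^ 2) * hd

theorem isSquare_of_sq_eq_four_mul {K : Type*} [Field K] (h2 : (2 : K) ≠ 0) {x y : K}
    (h : y ^ 2 = 4 * x) : IsSquare x :=
  ⟨y / 2, by field_simp; linear_combination -h⟩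

theorem isSquare_one_add_or_one_sub_of_aeval_quartic_eq_zero {K : Type*} [Field K]
    (h2 : (2 : K) ≠ 0) {d : K} (hd : d ^ 2 = -1) {r : K} (hr : aeval r quartic = 0) :
    IsSquare (1 + d) ∨ IsSquare (1 - d) := by
  rw [aeval_quartic, quartic_eq_mul_of_sq_eq_neg_one hd, mul_eq_zero, sub_eq_zero,
    sub_eq_zero] at hr
  exact hr.imp (isSquare_of_sq_eq_four_mul h2) (isSquare_of_sq_eq_four_mul h2)

theorem aeval_quartic_ne_zero (p : ℕ) [Fact p.Prime] (hp8 : p % 8 = 1)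
    (h : ∀ c : ℤ, (p : ℤ) ∣ (c ^ 2 + 1) → legendreSym p (1 + c) = -1) (r : ZMod p) :
    aeval r quartic ≠ 0 := by
  have h2 : (2 : ZMod p) ≠ 0 := Ring.two_ne_zero (by rw [ZMod.ringChar_zmod_n]; omega)
  have hnonsq : ∀ e : ZMod p, e ^ 2 = -1 → ¬IsSquare (1 + e) := by
    intro e he
    have hdvd : (p : ℤ) ∣ (e.cast : ℤ) ^ 2 + 1 := by
      rw [← ZMod.intCast_zmod_eq_zero_iff_dvd]
      push_cast [ZMod.intCast_zmod_cast, he]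
      ring
    simpa [legendreSym.eq_neg_one_iff, ZMod.intCast_zmod_cast] using h _ hdvd
  obtain ⟨d, hd⟩ := ZMod.exists_sq_eq_neg_one_iff.mpr (by omega : p % 4 ≠ 3)
  rw [← sq, eq_comm] at hd
  intro hr
  rcases isSquare_one_add_or_one_sub_of_aeval_quartic_eq_zero h2 hd hr with hsq | hsq
  · exact hnonsq d hd hsq
  · exact hnonsq (-d) (by rw [neg_sq, hd]) (by rwa [← sub_eq_add_neg])

/-- For a prime `p ≡ 1 (mod 8)` such that `1+i` is a quadratic non-residue mod `p`
(i.e. for `c` with `c² ≡ −1 (mod p)`, `1+c` is a non-residue), the curve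
`v² = p(u⁴ − 4u³ + 24u + 20)` has no `ℚ_p`-rational points. -/
theorem stmt17 (p : ℕ) [Fact p.Prime] (hp8 : p % 8 = 1)
    (h : ∀ c : ℤ, (p : ℤ) ∣ (c ^ 2 + 1) → legendreSym p (1 + c) = -1) :
    ¬ ∃ u v : ℚ_[p],
        v ^ 2 = (p : ℚ_[p]) * (u ^ 4 - 4 * u ^ 3 + 24 * u + 20) := by
  rintro ⟨u, v, huv⟩
  have hF := Padic.norm_aeval_of_monic quartic_monic (aeval_quartic_ne_zero p hp8 h) u
  rw [aeval_quartic, natDegree_quartic] at hF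
  obtain ⟨w, hw0, hw⟩ : ∃ w : ℚ_[p], w ≠ 0 ∧ max 1 ‖u‖ = ‖w‖ := by
    rcases le_total ‖u‖ 1 with hu | hu
    · exact ⟨1, one_ne_zero, by rw [max_eq_left hu, norm_one]⟩
    · exact ⟨u, norm_pos_iff.mp (one_pos.trans_le hu), max_eq_right hu⟩
  apply Padic.norm_sq_ne_norm_p (v / w ^ 2)
  have hw' : ‖w‖ ≠ 0 := norm_ne_zero_iff.mpr hw0
  rw [norm_div, norm_pow, div_pow, ← norm_pow, huv, norm_mul, hF, hw]
  field_simp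
end
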